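/- arXiv:1309.6246 — 4 statements merged into one kernel-verified Lean document; each statement's English description precedes it below -/
import Mathlib

section
/- Let (X,Σ,μ) be a standard (Lebesgue) probability space and T an invertible measure-preserving transformation of X that is aperiodic, i.e. μ({x ∈ X : T^n x = x for some n ≥ 1}) = 0. Fix m ∈ ℕ and define h(x) = log₂(1+x), let h^{(k)} denote the k-fold composition of h, and set g_m(x) = x·h^{(m+1)}(−log₂ x) for x ∈ (0,1], g_m(0) = 0; also let log₂^{(k)} denote the k-fold iterated base-2 logarithm. Let φ:[0,∞) → (0,∞) be an increasing function with ∫₁^∞ φ(x)/x² dx < ∞. Then for every binary partition P = {E, X∖E} with 0 < μ(E) < 1 such that max{μ(A) : A ∈ P_n} → 0 as n → ∞, one has limsup_{n→∞} H(g_m, P_n)/φ(log₂^{(m+2)} n) = ∞ (the limsup being taken over those n for which log₂^{(m+2)} n is defined and nonnegative). -/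
/-!
As the atoms of `P_n` shrink to measure `0`, for every `p > 0` the points whose itinerary
`i ↦ [T^i x ∈ E]` is `p`-periodic form a null set, so almost every itinerary is aperiodic. An
aperiodic word has infinitely many dyadic prefixes of length `2^j` whose minimal period `q` is at
least `2^j / 4`: while these periods stay small, the minimal period of the prefixes can never
grow again (a Fine–Wilf type argument). No point of the corresponding atom of `P_{2^j}` returns
to it within `q` steps, so the atom has measure at most `1/q ≤ 4 / 2^j`.

Group the scales `j` into blocks `(t_k, t_{k+1}]` with `t_k = tower (m+1) (2^k)`, and let `S_k`
be the set of points whose atom of `P_{2^j}` has measure at most `4 / 2^j` for some `j` in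
block `k`. Almost every point lies in infinitely many `S_k`, so by Borel–Cantelli
`∑ μ(S_k) = ∞`. For `n = 2^{t_{k+1}}` the atoms of `P_n` meeting `S_k` have measure
`β ≤ 2^{1 - t_k}`, where `g_m(β) ≥ 2^k β`; hence `H(g_m, P_n) ≥ 2^k μ(S_k)`, while
`log₂^{(m+2)} n = 2^{k+1}`. The integral condition on `φ` makes `∑ φ(2^k) / 2^k` finite, and
comparing the two series gives the claim.
-/

open MeasureTheory Filter Set

/-- The atom of the join partition `P ∨ T⁻¹P ∨ ⋯ ∨ T^{-(n-1)}P` of the binary partition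
`{E, Eᶜ}` corresponding to the 01-name `s`. -/
def cyl {X : Type*} (T : X → X) (E : Set X) (n : ℕ) (s : Fin n → Bool) : Set X :=
  {x | ∀ i : Fin n, (T^[(i : ℕ)] x ∈ E ↔ s i = true)}

/-- The `g`-entropy `H(g, P_n)` of the join partition `P_n` of the binary partition
`P = {E, Eᶜ}`. -/
noncomputable def binEnt {X : Type*} [MeasurableSpace X] (μ : Measure X)
    (T : X → X) (g : ℝ → ℝ) (E : Set X) (n : ℕ) : ℝ :=
  ∑ s : Fin n → Bool, g ((μ (cyl T E n s)).toReal)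

/-- `h(x) = log₂(1 + x)`. -/
noncomputable def hlog : ℝ → ℝ := fun x => Real.logb 2 (1 + x)

/-- `g_m(x) = x · h^{(m+1)}(−log₂ x)` for `x ∈ (0,1]`, `g_m(0) = 0`,
where `h^{(k)}` is the `k`-fold composition of `h(x) = log₂(1+x)`. -/
noncomputable def gm (m : ℕ) : ℝ → ℝ := fun x =>
  if x = 0 then 0 else x * (hlog^[m + 1] (-Real.logb 2 x))

/-- The `k`-fold iterated base-2 logarithm. -/
noncomputable def iterLog (k : ℕ) (x : ℝ) : ℝ := (fun y => Real.logb 2 y)^[k] x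

open Function
open scoped ENNReal

lemma summable_div_two_pow {φ : ℝ → ℝ} (hφ : ∀ x, 1 ≤ x → 0 ≤ φ x)
    (hmono : MonotoneOn φ (Ici 1)) (hint : IntegrableOn (fun x => φ x / x ^ 2) (Ioi 1)) :
    Summable fun k : ℕ => φ (2 ^ k) / 2 ^ k := by
  set I : ℕ → Set ℝ := fun k => Ioc (2 ^ k) (2 ^ (k + 1))
  have hI : ∀ k, I k ⊆ Ioi 1 := fun k x hx => (one_le_pow₀ one_le_two).trans_lt hx.1
  have hsum : Summable fun k => ∫ x in I k, φ x / x ^ 2 :=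
    (hasSum_integral_iUnion (fun _ => measurableSet_Ioc)
      (by simpa using (pow_right_mono₀ one_le_two).pairwise_disjoint_on_Ioc_succ)
      (hint.mono_set (iUnion_subset hI))).summable
  refine (hsum.mul_left 4).of_nonneg_of_le
    (fun k => div_nonneg (hφ _ (one_le_pow₀ one_le_two)) (by positivity)) fun k => ?_
  have h2k : (1 : ℝ) ≤ 2 ^ k := one_le_pow₀ one_le_two
  have hlow : ∀ x ∈ I k, φ (2 ^ k) / (2 ^ (k + 1)) ^ 2 ≤ φ x / x ^ 2 := fun x hx => by
    have hx0 : 0 < x := by linarith [hx.1]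
    gcongr
    · exact hφ _ (h2k.trans hx.1.le)
    · exact hmono h2k (h2k.trans hx.1.le) hx.1.le
    · exact hx.2
  calc φ (2 ^ k) / 2 ^ k
      = 4 * (volume.real (I k) * (φ (2 ^ k) / (2 ^ (k + 1)) ^ 2)) := by
        rw [Real.volume_real_Ioc_of_le (pow_le_pow_right₀ one_le_two k.le_succ), pow_succ]
        field_simp
        ring
    _ = 4 * ∫ _ in I k, φ (2 ^ k) / (2 ^ (k + 1)) ^ 2 := by
        rw [setIntegral_const, smul_eq_mul]
    _ ≤ 4 * ∫ x in I k, φ x / x ^ 2 := mul_le_mul_of_nonneg_left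
        (setIntegral_mono_on (integrableOn_const measure_Ioc_lt_top.ne) (hint.mono_set (hI k))
          measurableSet_Ioc hlow) (by norm_num)

lemma frequently_mul_le_of_not_summable {a b : ℕ → ℝ} (ha : 0 ≤ a) (hb : Summable b)
    (h : ¬ Summable a) (c : ℝ) : ∃ᶠ k in atTop, c * b k ≤ a k := fun hlt =>
  h <| (hb.mul_left c).of_norm_bounded_eventually_nat <| hlt.mono fun k hk => by
    rw [Real.norm_of_nonneg (ha k)]
    exact (not_le.1 hk).le

lemma not_summable_measureReal_of_ae_frequently {X : Type*} [MeasurableSpace X] {μ : Measure X}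
    [IsFiniteMeasure μ] [NeZero μ] {S : ℕ → Set X} (h : ∀ᵐ x ∂μ, ∃ᶠ k in atTop, x ∈ S k) :
    ¬ Summable fun k => μ.real (S k) := fun hsum => by
  have htsum : ∑' k, μ (S k) ≠ ∞ := by
    have : ∑' k, μ (S k) = ENNReal.ofReal (∑' k, μ.real (S k)) := by
      rw [ENNReal.ofReal_tsum_of_nonneg (fun _ => measureReal_nonneg) hsum]
      simp [measureReal_def]
    exact this ▸ ENNReal.ofReal_ne_top
  have hfalse : ∀ᵐ _ ∂μ, False := ((ae_eventually_notMem htsum).and h).mono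
    fun _ ⟨hnot, hin⟩ => (hin.and_eventually hnot).exists.elim fun _ h => h.2 h.1
  exact NeZero.ne μ (ae_eq_bot.1 (eventually_false_iff_eq_bot.1 hfalse))

lemma frequently_exists_mem_Ioc {f : ℕ → ℕ} (hf : StrictMono f) {p : ℕ → Prop}
    (h : ∃ᶠ j in atTop, p j) : ∃ᶠ k in atTop, ∃ j ∈ Finset.Ioc (f k) (f (k + 1)), p j := by
  refine frequently_atTop.2 fun K => ?_
  obtain ⟨j, hjK, hj⟩ := frequently_atTop.1 h (f K + 1)
  obtain ⟨k, hkj, hjk⟩ := hf.exists_between_of_tendsto_atTop hf.tendsto_atTop (x := j)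
    (by have := hf.monotone K.zero_le; omega)
  refine ⟨k, ?_, j, Finset.mem_Ioc.2 ⟨hkj, hjk⟩, hj⟩
  by_contra! hkK
  have := hf.monotone (show k + 1 ≤ K by omega)
  omega

section PrefixPeriod

def PrefixPeriod (w : ℕ → Bool) (p n : ℕ) : Prop := ∀ i, i + p < n → w (i + p) = w i

lemma exists_prefixPeriod (w : ℕ → Bool) (n : ℕ) : ∃ p, 0 < p ∧ PrefixPeriod w p n :=
  ⟨n + 1, n.succ_pos, fun _ h => absurd h (by omega)⟩

open Classical in
noncomputable def minPrefixPeriod (w : ℕ → Bool) (n : ℕ) : ℕ :=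
  Nat.find (exists_prefixPeriod w n)

variable {w : ℕ → Bool}

open Classical in
lemma minPrefixPeriod_pos (w : ℕ → Bool) (n : ℕ) : 0 < minPrefixPeriod w n :=
  (Nat.find_spec (exists_prefixPeriod w n)).1

open Classical in
lemma prefixPeriod_minPrefixPeriod (w : ℕ → Bool) (n : ℕ) :
    PrefixPeriod w (minPrefixPeriod w n) n :=
  (Nat.find_spec (exists_prefixPeriod w n)).2

open Classical in
lemma minPrefixPeriod_le {n p : ℕ} (hp : 0 < p) (h : PrefixPeriod w p n) :
    minPrefixPeriod w n ≤ p :=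
  Nat.find_min' _ ⟨hp, h⟩

lemma minPrefixPeriod_mono (w : ℕ → Bool) : Monotone (minPrefixPeriod w) :=
  fun _ _ hmn => minPrefixPeriod_le (minPrefixPeriod_pos w _)
    fun i hi => prefixPeriod_minPrefixPeriod w _ i (by omega)

/-- The Fine–Wilf type step: when the two periods fit into the prefix, the period of the prefix
of length `s` propagates to the letter at position `s`. -/
lemma minPrefixPeriod_succ_eq {s : ℕ}
    (h : minPrefixPeriod w (s + 1) + minPrefixPeriod w s ≤ s) :
    minPrefixPeriod w (s + 1) = minPrefixPeriod w s := by
  set Q := minPrefixPeriod w (s + 1)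
  set q := minPrefixPeriod w s
  have hQ := prefixPeriod_minPrefixPeriod w (s + 1)
  have hq := prefixPeriod_minPrefixPeriod w s
  have hQpos := minPrefixPeriod_pos w (s + 1)
  refine le_antisymm (minPrefixPeriod_le (minPrefixPeriod_pos w s) fun i hi => ?_)
    (minPrefixPeriod_mono w s.le_succ)
  rcases (Nat.lt_succ_iff.1 hi).lt_or_eq with hlt | heq
  · exact hq i hlt
  · have h1 := hQ (s - Q) (by omega)
    have h2 := hq (s - Q - q) (by omega)
    have h3 := hQ (s - q - Q) (by omega)
    rw [Nat.sub_add_cancel (by omega)] at h1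
    rw [show s - Q - q + q = s - Q by omega] at h2
    rw [show s - q - Q + Q = s - q by omega] at h3
    rw [heq, h1, h2, show s - Q - q = s - q - Q by omega, ← h3, show i = s - q by omega]

lemma exists_periodic_of_four_mul_minPrefixPeriod_lt {J : ℕ}
    (h : ∀ j ≥ J, 4 * minPrefixPeriod w (2 ^ j) < 2 ^ j) : ∃ p, 0 < p ∧ Periodic w p := by
  have hsucc : ∀ s ≥ 2 ^ J, minPrefixPeriod w (s + 1) = minPrefixPeriod w s := by
    intro s hs
    have hs0 : s ≠ 0 := by have := Nat.one_le_two_pow (n := J); omega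
    set j := Nat.log 2 s + 1
    have hsj : s < 2 ^ j := Nat.lt_pow_succ_log_self one_lt_two s
    have hjs : 2 ^ j ≤ 2 * s := by
      rw [pow_succ']; exact Nat.mul_le_mul_left 2 (Nat.pow_log_le_self 2 hs0)
    have hJj : J ≤ j := (Nat.pow_lt_pow_iff_right (by norm_num)).1 (hs.trans_lt hsj) |>.le
    have := h j hJj
    have := minPrefixPeriod_mono w (show s + 1 ≤ 2 ^ j by omega)
    have := minPrefixPeriod_mono w hsj.le
    exact minPrefixPeriod_succ_eq (by omega)
  have hconst : ∀ n ≥ 2 ^ J, minPrefixPeriod w n = minPrefixPeriod w (2 ^ J) := by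
    intro n hn
    induction n, hn using Nat.le_induction with
    | base => rfl
    | succ n hn ih => rw [hsucc n hn, ih]
  refine ⟨minPrefixPeriod w (2 ^ J), minPrefixPeriod_pos w _, fun i => ?_⟩
  have hn : 2 ^ J ≤ i + minPrefixPeriod w (2 ^ J) + 2 ^ J := by omega
  have := prefixPeriod_minPrefixPeriod w (i + minPrefixPeriod w (2 ^ J) + 2 ^ J)
  rw [hconst _ hn] at this
  exact this i (by have := Nat.two_pow_pos J; omega)

end PrefixPeriod

section Itinerary

variable {X : Type*} (T : X → X) (E : Set X)

open Classical in
noncomputable def itinerary (x : X) (i : ℕ) : Bool := decide (T^[i] x ∈ E)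

def atom (n : ℕ) (x : X) : Set X := cyl T E n fun i => itinerary T E x i

variable {T E}

lemma mem_cyl_iff {x : X} {n : ℕ} {s : Fin n → Bool} :
    x ∈ cyl T E n s ↔ (fun i : Fin n => itinerary T E x i) = s := by
  simp only [cyl, itinerary, mem_ofPred_eq, funext_iff]
  refine forall_congr' fun i => ?_
  cases s i <;> simp

lemma mem_atom_self (n : ℕ) (x : X) : x ∈ atom T E n x := mem_cyl_iff.2 rfl

lemma atom_subset_atom {n n' : ℕ} (h : n ≤ n') (x : X) : atom T E n' x ⊆ atom T E n x :=
  fun _ hy i => hy ⟨i, i.isLt.trans_le h⟩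

lemma itinerary_iterate (x : X) (d i : ℕ) :
    itinerary T E (T^[d] x) i = itinerary T E x (i + d) := by
  rw [itinerary, itinerary, ← Function.iterate_add_apply]

lemma prefixPeriod_of_iterate_mem_atom {x y : X} {n d : ℕ} (hy : y ∈ atom T E n x)
    (hdy : T^[d] y ∈ atom T E n x) : PrefixPeriod (itinerary T E x) d n := by
  intro i hi
  have h1 := congrFun (mem_cyl_iff.1 hy) ⟨i + d, hi⟩
  have h2 := congrFun (mem_cyl_iff.1 hdy) ⟨i, by omega⟩
  simp only [itinerary_iterate] at h1 h2
  exact h1.symm.trans h2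

lemma measurableSet_cyl [MeasurableSpace X] (hT : Measurable T) (hE : MeasurableSet E)
    (n : ℕ) (s : Fin n → Bool) : MeasurableSet (cyl T E n s) := by
  have : cyl T E n s = ⋂ i : Fin n, T^[i] ⁻¹' (if s i then E else Eᶜ) := by
    ext x
    simp only [cyl, mem_ofPred_eq, mem_iInter, mem_preimage]
    refine forall_congr' fun i => ?_
    cases s i <;> simp
  rw [this]
  exact .iInter fun i => hT.iterate i (by split <;> [exact hE; exact hE.compl])

end Itinerary

section Recurrence

variable {X : Type*} [MeasurableSpace X] {μ : Measure X} {T : X → X}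

lemma natCast_mul_measureReal_le_of_no_return [IsFiniteMeasure μ]
    (hT : MeasurePreserving T μ μ) {B : Set X} (hB : MeasurableSet B) {q : ℕ}
    (hB_ret : ∀ y ∈ B, ∀ d, 0 < d → d < q → T^[d] y ∉ B) :
    q * μ.real B ≤ μ.real univ := by
  have hdisj : (Finset.range q : Set ℕ).PairwiseDisjoint fun i => T^[i] ⁻¹' B := by
    have key : ∀ i i', i < i' → i' < q → Disjoint (T^[i] ⁻¹' B) (T^[i'] ⁻¹' B) := by
      refine fun i i' hii' hi' => Set.disjoint_left.2 fun x hx hx' => ?_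
      refine hB_ret _ hx (i' - i) (by omega) (by omega) ?_
      rwa [← Function.iterate_add_apply, Nat.sub_add_cancel hii'.le]
    intro i hi i' hi' hne
    simp only [Finset.coe_range, mem_Iio] at hi hi'
    rcases hne.lt_or_gt with h | h
    · exact key i i' h hi'
    · exact (key i' i h hi).symm
  calc (q : ℝ) * μ.real B = ∑ i ∈ Finset.range q, μ.real (T^[i] ⁻¹' B) := by
        simp [(hT.iterate _).measureReal_preimage hB.nullMeasurableSet]
    _ = μ.real (⋃ i ∈ Finset.range q, T^[i] ⁻¹' B) :=
        (measureReal_biUnion_finset hdisj fun i _ => hT.measurable.iterate i hB).symm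
    _ ≤ μ.real univ := measureReal_mono (subset_univ _)

end Recurrence

section ThinAtoms

variable {X : Type*} [MeasurableSpace X] (μ : Measure X) (T : X → X) (E : Set X)

def thinSet (j : ℕ) : Set X := {x | 2 ^ j * μ.real (atom T E (2 ^ j) x) ≤ 4}

variable {μ T E} [IsProbabilityMeasure μ]

lemma mem_thinSet_of_le_four_mul (hT : MeasurePreserving T μ μ) (hE : MeasurableSet E)
    {x : X} {j : ℕ} (h : 2 ^ j ≤ 4 * minPrefixPeriod (itinerary T E x) (2 ^ j)) :
    x ∈ thinSet μ T E j := by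
  set q := minPrefixPeriod (itinerary T E x) (2 ^ j)
  have hq : q * μ.real (atom T E (2 ^ j) x) ≤ 1 := by
    refine (natCast_mul_measureReal_le_of_no_return hT (measurableSet_cyl hT.measurable hE _ _)
      fun y hy d hd hdq hdy => ?_).trans_eq probReal_univ
    exact (minPrefixPeriod_le hd (prefixPeriod_of_iterate_mem_atom hy hdy)).not_gt hdq
  have h' : (2 : ℝ) ^ j ≤ 4 * q := by exact_mod_cast h
  show 2 ^ j * μ.real (atom T E (2 ^ j) x) ≤ 4
  nlinarith [measureReal_nonneg (μ := μ) (s := atom T E (2 ^ j) x)]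

lemma frequently_mem_thinSet (hT : MeasurePreserving T μ μ) (hE : MeasurableSet E) {x : X}
    (hx : ∀ p, 0 < p → ¬ Periodic (itinerary T E x) p) :
    ∃ᶠ j in atTop, x ∈ thinSet μ T E j := by
  refine fun hthin => ?_
  obtain ⟨J, hJ⟩ := eventually_atTop.1 hthin
  obtain ⟨p, hp, hper⟩ := exists_periodic_of_four_mul_minPrefixPeriod_lt fun j hj =>
    not_le.1 fun h => hJ j hj (mem_thinSet_of_le_four_mul hT hE h)
  exact hx p hp hper

omit [IsProbabilityMeasure μ] in
lemma measure_setOf_periodic_itinerary_eq_zero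
    (hmax : Tendsto (fun n => ⨆ s : Fin n → Bool, μ (cyl T E n s)) atTop (nhds 0))
    {p : ℕ} (hp : 0 < p) : μ {x | Periodic (itinerary T E x) p} = 0 := by
  have hbound : ∀ n, μ {x | Periodic (itinerary T E x) p} ≤
      2 ^ p * ⨆ s : Fin n → Bool, μ (cyl T E n s) := by
    intro n
    have hcover : {x | Periodic (itinerary T E x) p} ⊆
        ⋃ v : Fin p → Bool, cyl T E n fun i => v ⟨i % p, Nat.mod_lt _ hp⟩ := by
      intro x hx
      refine mem_iUnion.2 ⟨fun i => itinerary T E x i, mem_cyl_iff.2 (funext fun i => ?_)⟩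
      exact (Periodic.map_mod_nat hx i).symm
    calc μ {x | Periodic (itinerary T E x) p}
        ≤ ∑ v : Fin p → Bool, μ (cyl T E n fun i => v ⟨i % p, Nat.mod_lt _ hp⟩) :=
          (measure_mono hcover).trans (measure_iUnion_fintype_le _ _)
      _ ≤ ∑ _v : Fin p → Bool, ⨆ s : Fin n → Bool, μ (cyl T E n s) :=
          Finset.sum_le_sum fun v _ => le_iSup (fun s => μ (cyl T E n s)) _
      _ = 2 ^ p * ⨆ s : Fin n → Bool, μ (cyl T E n s) := by simp [nsmul_eq_mul]
  have hlim := ENNReal.Tendsto.const_mul (a := 2 ^ p) hmax (Or.inr (by simp))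
  rw [mul_zero] at hlim
  exact le_antisymm (ge_of_tendsto' hlim hbound) bot_le

lemma ae_frequently_mem_thinSet (hT : MeasurePreserving T μ μ) (hE : MeasurableSet E)
    (hmax : Tendsto (fun n => ⨆ s : Fin n → Bool, μ (cyl T E n s)) atTop (nhds 0)) :
    ∀ᵐ x ∂μ, ∃ᶠ j in atTop, x ∈ thinSet μ T E j := by
  have haper : ∀ᵐ x ∂μ, ∀ p, 0 < p → ¬ Periodic (itinerary T E x) p := by
    refine ae_all_iff.2 fun p => ?_
    rcases p.eq_zero_or_pos with rfl | hp
    · exact ae_of_all _ fun _ h => absurd h (lt_irrefl 0)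
    · exact (measure_eq_zero_iff_ae_notMem.1
        (measure_setOf_periodic_itinerary_eq_zero hmax hp)).mono fun _ hx _ => hx
  exact haper.mono fun x hx => frequently_mem_thinSet hT hE hx

end ThinAtoms

section IteratedLogarithms

def tower : ℕ → ℕ → ℕ
  | 0, a => a
  | t + 1, a => 2 ^ tower t a

lemma le_tower (t a : ℕ) : a ≤ tower t a := by
  induction t with
  | zero => rfl
  | succ t ih => exact ih.trans Nat.lt_two_pow_self.le

lemma tower_strictMono (t : ℕ) : StrictMono (tower t) := by
  induction t with
  | zero => exact strictMono_id
  | succ t ih => exact fun a b h => Nat.pow_lt_pow_right one_lt_two (ih h)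

lemma natCast_tower_succ (t a : ℕ) : (tower (t + 1) a : ℝ) = 2 ^ tower t a := by
  simp [tower]

lemma iterLog_tower (t a : ℕ) : iterLog t (tower t a) = a := by
  induction t with
  | zero => rfl
  | succ t ih =>
    rw [iterLog, Function.iterate_succ_apply, natCast_tower_succ, Real.logb_pow,
      Real.logb_self_eq_one one_lt_two, mul_one]
    exact ih

lemma hlog_nonneg {y : ℝ} (hy : 0 ≤ y) : 0 ≤ hlog y :=
  Real.logb_nonneg one_lt_two (by linarith)

lemma hlog_le_hlog {a b : ℝ} (ha : 0 ≤ a) (hab : a ≤ b) : hlog a ≤ hlog b :=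
  Real.logb_le_logb_of_le one_lt_two (by linarith) (by linarith)

lemma hlog_iterate_nonneg (t : ℕ) {y : ℝ} (hy : 0 ≤ y) : 0 ≤ hlog^[t] y := by
  induction t generalizing y with
  | zero => exact hy
  | succ t ih => exact ih (hlog_nonneg hy)

lemma hlog_iterate_le_hlog_iterate (t : ℕ) {a b : ℝ} (ha : 0 ≤ a) (hab : a ≤ b) :
    hlog^[t] a ≤ hlog^[t] b := by
  induction t generalizing a b with
  | zero => exact hab
  | succ t ih => exact ih (hlog_nonneg ha) (hlog_le_hlog ha hab)

lemma le_hlog_two_pow (B : ℕ) : (B : ℝ) ≤ hlog (2 ^ B) := by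
  calc (B : ℝ) = Real.logb 2 (2 ^ B) := by
        rw [Real.logb_pow, Real.logb_self_eq_one one_lt_two, mul_one]
    _ ≤ hlog (2 ^ B) := Real.logb_le_logb_of_le one_lt_two (by positivity) (by linarith)

lemma le_hlog_iterate_tower (t a : ℕ) : (a : ℝ) ≤ hlog^[t] (tower t a) := by
  induction t with
  | zero => exact le_rfl
  | succ t ih =>
    rw [Function.iterate_succ_apply, natCast_tower_succ]
    exact ih.trans (hlog_iterate_le_hlog_iterate t (Nat.cast_nonneg _) (le_hlog_two_pow _))

lemma hlog_two_pow_sub_one (B : ℕ) : hlog (2 ^ B - 1) = B := by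
  rw [hlog, add_sub_cancel, Real.logb_pow, Real.logb_self_eq_one one_lt_two, mul_one]

lemma le_hlog_iterate_tower_sub_one (t a : ℕ) :
    (a : ℝ) ≤ hlog^[t + 1] (tower (t + 1) a - 1) := by
  rw [Function.iterate_succ_apply, natCast_tower_succ, hlog_two_pow_sub_one]
  exact le_hlog_iterate_tower t a

end IteratedLogarithms

section Entropy

lemma mul_hlog_iterate_le_gm (m : ℕ) {β r : ℝ} (hβ : 0 < β) (hr : 0 ≤ r)
    (h : r ≤ -Real.logb 2 β) : β * hlog^[m + 1] r ≤ gm m β := by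
  rw [gm, if_neg hβ.ne']
  exact mul_le_mul_of_nonneg_left (hlog_iterate_le_hlog_iterate _ hr h) hβ.le

lemma gm_nonneg (m : ℕ) {β : ℝ} (h0 : 0 ≤ β) (h1 : β ≤ 1) : 0 ≤ gm m β := by
  unfold gm
  split_ifs
  · exact le_rfl
  · exact mul_nonneg h0
      (hlog_iterate_nonneg _ (neg_nonneg.2 (Real.logb_nonpos one_lt_two h0 h1)))

variable {X : Type*} [MeasurableSpace X] {μ : Measure X} [IsProbabilityMeasure μ]
  {T : X → X} {E : Set X}

lemma sub_two_le_neg_logb_of_mem_thinSet {y : X} {j n : ℕ} (hy : y ∈ thinSet μ T E j)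
    (hn : 2 ^ j ≤ n) (hpos : 0 < μ.real (atom T E n y)) :
    (j : ℝ) - 2 ≤ -Real.logb 2 (μ.real (atom T E n y)) := by
  have hle : 2 ^ j * μ.real (atom T E n y) ≤ 2 ^ 2 :=
    (mul_le_mul_of_nonneg_left (measureReal_mono (atom_subset_atom hn y)) (by positivity)).trans
      (hy.trans_eq (by norm_num))
  have := Real.logb_le_logb_of_le one_lt_two (by positivity) hle
  rw [Real.logb_mul (by positivity) hpos.ne', Real.logb_pow, Real.logb_pow,
    Real.logb_self_eq_one one_lt_two] at this
  push_cast at this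
  linarith

lemma measureReal_mul_le_binEnt {g : ℝ → ℝ} (hg : ∀ β ∈ Icc (0 : ℝ) 1, 0 ≤ g β) {S : Set X}
    {n : ℕ} {F : ℝ} (hF : 0 ≤ F)
    (hS : ∀ y ∈ S, μ.real (atom T E n y) * F ≤ g (μ.real (atom T E n y))) :
    μ.real S * F ≤ binEnt μ T g E n := by
  classical
  set 𝒯 := Finset.univ.filter fun s : Fin n → Bool => ∃ y ∈ S, atom T E n y = cyl T E n s
  have hcover : S ⊆ ⋃ s ∈ 𝒯, cyl T E n s := fun y hy =>
    mem_biUnion (Finset.mem_filter.2 ⟨Finset.mem_univ _, y, hy, rfl⟩) (mem_atom_self n y)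
  calc μ.real S * F ≤ (∑ s ∈ 𝒯, μ.real (cyl T E n s)) * F :=
        mul_le_mul_of_nonneg_right
          ((measureReal_mono hcover (measure_ne_top _ _)).trans
            (measureReal_biUnion_finset_le _ _)) hF
    _ = ∑ s ∈ 𝒯, μ.real (cyl T E n s) * F := Finset.sum_mul ..
    _ ≤ ∑ s ∈ 𝒯, g (μ.real (cyl T E n s)) := Finset.sum_le_sum fun s hs => by
        obtain ⟨y, hy, hys⟩ := (Finset.mem_filter.1 hs).2
        rw [← hys]
        exact hS y hy
    _ ≤ binEnt μ T g E n := Finset.sum_le_sum_of_subset_of_nonneg (Finset.subset_univ _)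
        fun _ _ _ => hg _ ⟨measureReal_nonneg, measureReal_le_one⟩

variable (μ T E)

def scale (m k : ℕ) : ℕ := tower (m + 1) (2 ^ k)

def block (m k : ℕ) : Set X :=
  ⋃ j ∈ Finset.Ioc (scale m k) (scale m (k + 1)), thinSet μ T E j

variable {μ T E}

lemma scale_strictMono (m : ℕ) : StrictMono (scale m) :=
  (tower_strictMono _).comp (pow_right_strictMono₀ one_lt_two)

lemma measureReal_block_mul_le_binEnt (m k : ℕ) :
    μ.real (block μ T E m k) * 2 ^ k ≤ binEnt μ T (gm m) E (2 ^ scale m (k + 1)) := by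
  have hF : (2 : ℝ) ^ k ≤ hlog^[m + 1] ((scale m k : ℝ) - 1) := by
    exact_mod_cast le_hlog_iterate_tower_sub_one m (2 ^ k)
  refine (mul_le_mul_of_nonneg_left hF measureReal_nonneg).trans
    (measureReal_mul_le_binEnt (fun β hβ => gm_nonneg m hβ.1 hβ.2)
      ((by positivity : (0 : ℝ) ≤ 2 ^ k).trans hF) fun y hy => ?_)
  obtain ⟨j, hj, hyj⟩ := mem_iUnion₂.1 hy
  rw [Finset.mem_Ioc] at hj
  rcases (measureReal_nonneg (μ := μ) (s := atom T E (2 ^ scale m (k + 1)) y)).eq_or_lt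
    with h0 | hpos
  · simp [← h0, gm]
  · have hj' : (scale m k : ℝ) + 1 ≤ j := by exact_mod_cast hj.1
    have hscale : (1 : ℝ) ≤ scale m k := by
      exact_mod_cast Nat.one_le_two_pow.trans (le_tower _ _)
    have := sub_two_le_neg_logb_of_mem_thinSet hyj (Nat.pow_le_pow_right two_pos hj.2) hpos
    exact mul_hlog_iterate_le_gm m hpos (by linarith) (by linarith)

lemma ae_frequently_mem_block (hT : MeasurePreserving T μ μ) (hE : MeasurableSet E)
    (hmax : Tendsto (fun n => ⨆ s : Fin n → Bool, μ (cyl T E n s)) atTop (nhds 0)) (m : ℕ) :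
    ∀ᵐ x ∂μ, ∃ᶠ k in atTop, x ∈ block μ T E m k :=
  (ae_frequently_mem_thinSet hT hE hmax).mono fun _ hx =>
    (frequently_exists_mem_Ioc (scale_strictMono m) hx).mono fun _ ⟨j, hj, hxj⟩ =>
      mem_iUnion₂.2 ⟨j, hj, hxj⟩

end Entropy

theorem statement1_general {X : Type*} [MeasurableSpace X]
    (μ : Measure X) [IsProbabilityMeasure μ] (T : X → X)
    (hT : MeasurePreserving T μ μ)
    (m : ℕ) (φ : ℝ → ℝ)
    (hφpos : ∀ x : ℝ, 0 ≤ x → 0 < φ x)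
    (hφmono : MonotoneOn φ (Set.Ici 0))
    (hφint : IntegrableOn (fun x => φ x / x ^ 2) (Set.Ioi 1))
    (E : Set X) (hE : MeasurableSet E)
    (hmax : Tendsto (fun n => ⨆ s : Fin n → Bool, μ (cyl T E n s)) atTop (nhds 0)) :
    ∀ C : ℝ, ∃ᶠ n : ℕ in atTop,
      0 ≤ iterLog (m + 2) (n : ℝ) ∧
        C ≤ binEnt μ T (gm m) E n / φ (iterLog (m + 2) (n : ℝ)) := by
  intro C
  have hφ : Summable fun k : ℕ => φ (2 ^ (k + 1)) / 2 ^ (k + 1) :=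
    (summable_nat_add_iff 1).2 <| summable_div_two_pow (fun x hx => (hφpos x (by linarith)).le)
      (hφmono.mono (Ici_subset_Ici.2 zero_le_one)) hφint
  have hblock : ¬ Summable fun k => μ.real (block μ T E m k) :=
    not_summable_measureReal_of_ae_frequently (ae_frequently_mem_block hT hE hmax m)
  have hscale : Tendsto (fun k => 2 ^ scale m (k + 1)) atTop atTop :=
    ((pow_right_strictMono₀ one_lt_two).comp
      ((scale_strictMono m).comp (strictMono_id.add_const 1))).tendsto_atTop
  refine hscale.frequently_map _ (fun k hk => ?_)
    (frequently_mul_le_of_not_summable (fun _ => measureReal_nonneg) hφ hblock (2 * C))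
  have hlog : iterLog (m + 2) ((2 ^ scale m (k + 1) : ℕ) : ℝ) = 2 ^ (k + 1) := by
    exact_mod_cast iterLog_tower (m + 2) (2 ^ (k + 1))
  have hφk : 0 < φ (2 ^ (k + 1)) := hφpos _ (by positivity)
  refine ⟨hlog ▸ by positivity, (le_div_iff₀ (hlog ▸ hφk)).2 ?_⟩
  rw [hlog]
  calc C * φ (2 ^ (k + 1)) = 2 * C * (φ (2 ^ (k + 1)) / 2 ^ (k + 1)) * 2 ^ k := by
        field_simp
        ring
    _ ≤ μ.real (block μ T E m k) * 2 ^ k := by gcongr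
    _ ≤ binEnt μ T (gm m) E (2 ^ scale m (k + 1)) := measureReal_block_mul_le_binEnt m k

/-- For every aperiodic invertible measure-preserving transformation of a standard
probability space, every `m`, every increasing `φ : [0,∞) → (0,∞)` with
`∫₁^∞ φ(x)/x² dx < ∞`, and every binary partition `P` whose join partitions have maximal
atom measure tending to `0`, `limsup H(g_m, Pₙ)/φ(log₂^{(m+2)} n) = ∞`, the `limsup`
being taken over those `n` with `log₂^{(m+2)} n` defined and nonnegative. -/
theorem statement1 {X : Type*} [MeasurableSpace X] [StandardBorelSpace X]
    (μ : Measure X) [IsProbabilityMeasure μ] (T : X → X)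
    (hT : MeasurePreserving T μ μ)
    (hinv : ∃ S : X → X, Measurable S ∧ Function.LeftInverse S T ∧ Function.RightInverse S T)
    (haper : μ {x | ∃ n : ℕ, 1 ≤ n ∧ T^[n] x = x} = 0)
    (m : ℕ) (φ : ℝ → ℝ)
    (hφpos : ∀ x : ℝ, 0 ≤ x → 0 < φ x)
    (hφmono : MonotoneOn φ (Set.Ici 0))
    (hφint : IntegrableOn (fun x => φ x / x ^ 2) (Set.Ioi 1))
    (E : Set X) (hE : MeasurableSet E) (h0 : 0 < μ E) (h1 : μ E < 1)
    (hmax : Tendsto (fun n => ⨆ s : Fin n → Bool, μ (cyl T E n s)) atTop (nhds 0)) :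
    ∀ C : ℝ, ∃ᶠ n : ℕ in atTop,
      0 ≤ iterLog (m + 2) (n : ℝ) ∧
        C ≤ binEnt μ T (gm m) E n / φ (iterLog (m + 2) (n : ℝ)) :=
  statement1_general μ T hT m φ hφpos hφmono hφint E hE hmax
end

section
/- Let (X,Σ,μ) be a probability space, let g:[0,1]→ℝ be concave with g(0) = lim_{x→0⁺} g(x) = 0, and let P be a finite measurable partition of X containing a set E with 0 < μ(E) < 1. Let g′₋(1/2) denote the left derivative of g at 1/2 (which exists by concavity) and let d_max := sup_{x,y∈[0,1]} |g(x) − g(y)|. Then for every measurable set F ⊆ X, H(g, P) ≥ H_F(g, P) − |g′₋(1/2)| − d_max. -/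
/-!
Write `a i = μ(P i ∩ F) ≤ b i = μ(P i)`. A concave `g` has secant slopes on `[a, b] ⊆ [0, 1/2]`
at least its left derivative `D` at `1/2`, so each part with `b i ≤ 1/2` contributes
`g (a i) - g (b i) ≤ |D| b i`, and these contributions sum to at most `|D|`. Since the `b i` sum
to `1`, at most one part has `b i > 1/2`, and its contribution is at most `d_max`.
-/

open MeasureTheory Filter Set Finset

namespace ConcaveOn

variable {S : Set ℝ} {f : ℝ → ℝ} {a b c D : ℝ}

lemma le_slope_of_hasDerivWithinAt_Iio_of_le (hf : ConcaveOn ℝ S f) (ha : a ∈ S) (hc : c ∈ S)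
    (hab : a < b) (hbc : b ≤ c) (hD : HasDerivWithinAt f D (Iio c) c) :
    D ≤ slope f a b := by
  have hb : b ∈ S := hf.1.ordConnected.out ha hc ⟨hab.le, hbc⟩
  calc D ≤ slope f a c := hf.le_slope_of_hasDerivWithinAt_Iio ha hc (hab.trans_le hbc) hD
    _ ≤ slope f a b :=
      hf.slope_anti ha ⟨hb, hab.ne'⟩ ⟨hc, (hab.trans_le hbc).ne'⟩ hbc

lemma sub_le_abs_mul_of_hasDerivWithinAt_Iio (hf : ConcaveOn ℝ S f) (ha : a ∈ S) (hc : c ∈ S)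
    (hab : a ≤ b) (hbc : b ≤ c) (hD : HasDerivWithinAt f D (Iio c) c) :
    f a - f b ≤ |D| * (b - a) := by
  rcases hab.eq_or_lt with rfl | hab
  · simp
  have hslope := hf.le_slope_of_hasDerivWithinAt_Iio_of_le ha hc hab hbc hD
  rw [slope_def_field, le_div_iff₀ (sub_pos.mpr hab)] at hslope
  nlinarith [neg_le_abs D]

lemma bddAbove_image_Icc (hf : ConcaveOn ℝ (Icc a b) f) : BddAbove (f '' Icc a b) := by
  refine ⟨2 * f ((a + b) / 2) - min (f a) (f b), ?_⟩
  rintro _ ⟨z, hz, rfl⟩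
  have hab : a ≤ b := hz.1.trans hz.2
  have hz' : a + b - z ∈ Icc a b := ⟨by linarith [hz.2], by linarith [hz.1]⟩
  -- `(a + b) / 2` is the midpoint of `z` and its reflection `a + b - z`
  have hmid := hf.2 hz hz' (by norm_num : (0 : ℝ) ≤ 1 / 2) (by norm_num : (0 : ℝ) ≤ 1 / 2)
    (by norm_num)
  have hmin := hf.min_le_of_mem_Icc (left_mem_Icc.mpr hab) (right_mem_Icc.mpr hab) hz'
  simp only [smul_eq_mul] at hmid
  rw [show 1 / 2 * z + 1 / 2 * (a + b - z) = (a + b) / 2 by ring] at hmid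
  linarith

lemma bddBelow_image_Icc (hf : ConcaveOn ℝ (Icc a b) f) : BddBelow (f '' Icc a b) := by
  refine ⟨min (f a) (f b), ?_⟩
  rintro _ ⟨z, hz, rfl⟩
  have hab : a ≤ b := hz.1.trans hz.2
  exact hf.min_le_of_mem_Icc (left_mem_Icc.mpr hab) (right_mem_Icc.mpr hab) hz

lemma sub_le_sSup_abs_sub (hf : ConcaveOn ℝ (Icc a b) f) {x y : ℝ} (hx : x ∈ Icc a b)
    (hy : y ∈ Icc a b) :
    f x - f y ≤ sSup {d : ℝ | ∃ x ∈ Icc a b, ∃ y ∈ Icc a b, d = |f x - f y|} := by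
  obtain ⟨M, hM⟩ := hf.bddAbove_image_Icc
  obtain ⟨m, hm⟩ := hf.bddBelow_image_Icc
  have hbdd : BddAbove {d : ℝ | ∃ x ∈ Icc a b, ∃ y ∈ Icc a b, d = |f x - f y|} := by
    refine ⟨M - m, ?_⟩
    rintro _ ⟨x, hx, y, hy, rfl⟩
    have := hM (mem_image_of_mem f hx)
    have := hM (mem_image_of_mem f hy)
    have := hm (mem_image_of_mem f hx)
    have := hm (mem_image_of_mem f hy)
    exact abs_sub_le_iff.mpr ⟨by linarith, by linarith⟩
  exact (le_abs_self _).trans (le_csSup hbdd ⟨x, hx, y, hy, rfl⟩)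

end ConcaveOn

lemma card_filter_half_lt_le_one {ι : Type*} [Fintype ι] {w : ι → ℝ} (hw : ∀ i, 0 ≤ w i)
    (hsum : ∑ i, w i = 1) : #{i | 1 / 2 < w i} ≤ 1 := by
  classical
  refine card_le_one.mpr fun i hi j hj => ?_
  by_contra hij
  have hpair : w i + w j ≤ 1 := by
    rw [← hsum, ← sum_pair hij]
    exact sum_le_sum_of_subset_of_nonneg (subset_univ _) fun k _ _ => hw k
  simp only [mem_filter, Finset.mem_univ, true_and] at hi hj
  linarith

lemma ConcaveOn.sum_sub_abs_sub_sSup_le {ι : Type*} [Fintype ι] {g : ℝ → ℝ}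
    (hg : ConcaveOn ℝ (Icc 0 1) g) {D : ℝ} (hD : HasDerivWithinAt g D (Iio (1 / 2)) (1 / 2))
    {a b : ι → ℝ} (ha : ∀ i, 0 ≤ a i) (hab : ∀ i, a i ≤ b i) (hb : ∑ i, b i = 1) :
    ∑ i, g (a i) - |D| - sSup {d : ℝ | ∃ x ∈ Icc (0 : ℝ) 1, ∃ y ∈ Icc (0 : ℝ) 1, d = |g x - g y|}
      ≤ ∑ i, g (b i) := by
  classical
  set dmax := sSup {d : ℝ | ∃ x ∈ Icc (0 : ℝ) 1, ∃ y ∈ Icc (0 : ℝ) 1, d = |g x - g y|}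
  have hb0 : ∀ i, 0 ≤ b i := fun i => (ha i).trans (hab i)
  have hbI : ∀ i, b i ∈ Icc (0 : ℝ) 1 := fun i =>
    ⟨hb0 i, hb ▸ single_le_sum (fun j _ => hb0 j) (Finset.mem_univ i)⟩
  have haI : ∀ i, a i ∈ Icc (0 : ℝ) 1 := fun i => ⟨ha i, (hab i).trans (hbI i).2⟩
  have hdmax : 0 ≤ dmax := by
    have h0 : (0 : ℝ) ∈ Icc (0 : ℝ) 1 := left_mem_Icc.mpr zero_le_one
    simpa only [sub_self] using hg.sub_le_sSup_abs_sub h0 h0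
  have hsmall : ∑ i with b i ≤ 1 / 2, (g (a i) - g (b i)) ≤ |D| :=
    calc ∑ i with b i ≤ 1 / 2, (g (a i) - g (b i))
        ≤ ∑ i with b i ≤ 1 / 2, |D| * b i := by
          refine sum_le_sum fun i hi => ?_
          have := hg.sub_le_abs_mul_of_hasDerivWithinAt_Iio (haI i) (by norm_num)
            (hab i) (mem_filter.mp hi).2 hD
          nlinarith [abs_nonneg D, ha i]
      _ = |D| * ∑ i with b i ≤ 1 / 2, b i := (mul_sum _ _ _).symm
      _ ≤ |D| * 1 := by
          gcongr
          exact hb ▸ sum_le_sum_of_subset_of_nonneg (filter_subset _ _) fun i _ _ => hb0 i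
      _ = |D| := mul_one _
  have hlarge : ∑ i with ¬b i ≤ 1 / 2, (g (a i) - g (b i)) ≤ dmax :=
    calc ∑ i with ¬b i ≤ 1 / 2, (g (a i) - g (b i))
        ≤ #{i | ¬b i ≤ 1 / 2} • dmax :=
          sum_le_card_nsmul _ _ _ fun i _ => hg.sub_le_sSup_abs_sub (haI i) (hbI i)
      _ ≤ 1 • dmax := by
          gcongr
          simpa only [not_le] using card_filter_half_lt_le_one hb0 hb
      _ = dmax := one_nsmul _
  have := add_le_add hsmall hlarge
  rw [sum_filter_add_sum_filter_not, sum_sub_distrib] at this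
  linarith

theorem statement14_general {X : Type*} [MeasurableSpace X] (μ : Measure X)
    [IsProbabilityMeasure μ]
    (g : ℝ → ℝ) (hconc : ConcaveOn ℝ (Set.Icc 0 1) g)
    (k : ℕ) (P : Fin k → Set X)
    (hPmeas : ∀ i, MeasurableSet (P i))
    (hPdisj : ∀ i j, i ≠ j → Disjoint (P i) (P j))
    (hPcover : (⋃ i, P i) = Set.univ)
    (D : ℝ) (hD : HasDerivWithinAt g D (Set.Iio (1 / 2 : ℝ)) (1 / 2 : ℝ))
    (F : Set X) :
    (∑ i, g ((μ (P i ∩ F)).toReal)) - |D| -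
        sSup {d : ℝ | ∃ x ∈ Set.Icc (0 : ℝ) 1, ∃ y ∈ Set.Icc (0 : ℝ) 1, d = |g x - g y|} ≤
      ∑ i, g ((μ (P i)).toReal) := by
  have hsum : ∑ i, μ.real (P i) = 1 := by
    rw [← measureReal_iUnion_fintype hPdisj hPmeas, hPcover, probReal_univ]
  exact hconc.sum_sub_abs_sub_sSup_le hD (fun i => measureReal_nonneg)
    (fun i => measureReal_mono inter_subset_left) hsum

/-- Lemma: for an entropy function `g`, a finite measurable partition `P` (indexed by
`Fin k`) containing a set of measure strictly between `0` and `1`, and any measurable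
`F`, one has `H(g,P) ≥ H_F(g,P) − |g′₋(1/2)| − d_max`, where `g′₋(1/2)` is the left
derivative of `g` at `1/2` (which exists by concavity, and is here given as a hypothesis)
and `d_max = sup_{x,y ∈ [0,1]} |g(x) − g(y)|`. -/
theorem statement14 {X : Type*} [MeasurableSpace X] (μ : Measure X)
    [IsProbabilityMeasure μ]
    (g : ℝ → ℝ) (hconc : ConcaveOn ℝ (Set.Icc 0 1) g) (hg0 : g 0 = 0)
    (hg0' : Tendsto g (nhdsWithin 0 (Set.Ioi 0)) (nhds 0))
    (k : ℕ) (P : Fin k → Set X)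
    (hPmeas : ∀ i, MeasurableSet (P i))
    (hPdisj : ∀ i j, i ≠ j → Disjoint (P i) (P j))
    (hPcover : (⋃ i, P i) = Set.univ)
    (i₀ : Fin k) (hE0 : 0 < μ (P i₀)) (hE1 : μ (P i₀) < 1)
    (D : ℝ) (hD : HasDerivWithinAt g D (Set.Iio (1 / 2 : ℝ)) (1 / 2 : ℝ))
    (F : Set X) (hF : MeasurableSet F) :
    (∑ i, g ((μ (P i ∩ F)).toReal)) - |D| -
        sSup {d : ℝ | ∃ x ∈ Set.Icc (0 : ℝ) 1, ∃ y ∈ Set.Icc (0 : ℝ) 1, d = |g x - g y|} ≤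
      ∑ i, g ((μ (P i)).toReal) :=
  statement14_general μ g hconc k P hPmeas hPdisj hPcover D hD F
end

section
/- Let (X,Σ,μ) be a probability space, let g:[0,1]→ℝ be concave with g(0) = lim_{x→0⁺} g(x) = 0, and let φ_g(x) = g(x)/x for x ∈ (0,1]. Let P be a finite measurable partition of X, F ∈ Σ, and λ ∈ (0,1] be such that μ(B ∩ F) ≤ λ for every B ∈ P. Then H_F(g, P) ≥ φ_g(λ)·μ(F). -/
/-!
A concave `g` with `g 0 = 0` has nonincreasing slope `g x / x`, so each cell with
`μ (B ∩ F) ≤ λ` contributes at least `φ_g(λ) · μ (B ∩ F)`; summing over the partition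
gives `φ_g(λ) · μ F`.
-/

open MeasureTheory Filter Set

theorem ConcaveOn.div_mul_le_of_map_zero {s : Set ℝ} {g : ℝ → ℝ} (hg : ConcaveOn ℝ s g)
    (h0 : 0 ∈ s) (hg0 : g 0 = 0) {lam x : ℝ} (hlam : lam ∈ s) (hx0 : 0 ≤ x) (hxl : x ≤ lam) :
    g lam / lam * x ≤ g x := by
  rcases hx0.eq_or_lt with rfl | hx
  · simp [hg0]
  have hxs : x ∈ s := hg.1.ordConnected.out h0 hlam ⟨hx0, hxl⟩
  have hslope : -g x / x ≤ -g lam / lam := by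
    simpa [hg0] using hg.neg.secant_mono h0 hxs hlam hx.ne' (hx.trans_le hxl).ne' hxl
  calc g lam / lam * x ≤ g x / x * x :=
        mul_le_mul_of_nonneg_right (by simpa only [neg_div, neg_le_neg_iff] using hslope) hx0
    _ = g x := div_mul_cancel₀ _ hx.ne'

theorem measureReal_eq_sum_inter_of_iUnion_eq_univ {X ι : Type*} [MeasurableSpace X]
    [Fintype ι] (μ : Measure X) [IsFiniteMeasure μ] {P : ι → Set X}
    (hPmeas : ∀ i, MeasurableSet (P i)) (hPdisj : Pairwise (Function.onFun Disjoint P))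
    (hPcover : ⋃ i, P i = univ) {F : Set X} (hF : MeasurableSet F) :
    μ.real F = ∑ i, μ.real (P i ∩ F) := by
  rw [← measureReal_iUnion_fintype (fun i j hij => (hPdisj hij).mono inter_subset_left
      inter_subset_left) (fun i => (hPmeas i).inter hF), ← iUnion_inter, hPcover, univ_inter]

theorem statement15_general {X : Type*} [MeasurableSpace X] (μ : Measure X)
    [IsProbabilityMeasure μ]
    (g : ℝ → ℝ) (hconc : ConcaveOn ℝ (Set.Icc 0 1) g) (hg0 : g 0 = 0)
    (k : ℕ) (P : Fin k → Set X)
    (hPmeas : ∀ i, MeasurableSet (P i))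
    (hPdisj : ∀ i j, i ≠ j → Disjoint (P i) (P j))
    (hPcover : (⋃ i, P i) = Set.univ)
    (F : Set X) (hF : MeasurableSet F)
    (lam : ℝ) (hlam0 : 0 < lam) (hlam1 : lam ≤ 1)
    (hbound : ∀ i, μ (P i ∩ F) ≤ ENNReal.ofReal lam) :
    g lam / lam * (μ F).toReal ≤ ∑ i, g ((μ (P i ∩ F)).toReal) := by
  have hsum : μ.real F = ∑ i, μ.real (P i ∩ F) :=
    measureReal_eq_sum_inter_of_iUnion_eq_univ μ hPmeas (fun i j hij => hPdisj i j hij) hPcover hF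
  rw [← measureReal_def, hsum, Finset.mul_sum]
  refine Finset.sum_le_sum fun i _ => ?_
  exact hconc.div_mul_le_of_map_zero ⟨le_rfl, zero_le_one⟩ hg0 ⟨hlam0.le, hlam1⟩
    measureReal_nonneg (ENNReal.toReal_le_of_le_ofReal hlam0.le (hbound i))

/-- Lemma: for an entropy function `g` with `φ_g(x) = g(x)/x`, a finite measurable
partition `P` (indexed by `Fin k`), a measurable set `F`, and `λ ∈ (0,1]` with
`μ(B ∩ F) ≤ λ` for every `B ∈ P`, one has `H_F(g,P) ≥ φ_g(λ)·μ(F)`. -/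
theorem statement15 {X : Type*} [MeasurableSpace X] (μ : Measure X)
    [IsProbabilityMeasure μ]
    (g : ℝ → ℝ) (hconc : ConcaveOn ℝ (Set.Icc 0 1) g) (hg0 : g 0 = 0)
    (hg0' : Tendsto g (nhdsWithin 0 (Set.Ioi 0)) (nhds 0))
    (k : ℕ) (P : Fin k → Set X)
    (hPmeas : ∀ i, MeasurableSet (P i))
    (hPdisj : ∀ i j, i ≠ j → Disjoint (P i) (P j))
    (hPcover : (⋃ i, P i) = Set.univ)
    (F : Set X) (hF : MeasurableSet F)
    (lam : ℝ) (hlam0 : 0 < lam) (hlam1 : lam ≤ 1)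
    (hbound : ∀ i, μ (P i ∩ F) ≤ ENNReal.ofReal lam) :
    g lam / lam * (μ F).toReal ≤ ∑ i, g ((μ (P i ∩ F)).toReal) :=
  statement15_general μ g hconc hg0 k P hPmeas hPdisj hPcover F hF lam hlam0 hlam1 hbound
end

section
/- Let g:[0,1]→ℝ be concave with g(0) = lim_{x→0⁺} g(x) = 0, and suppose g is subderivative, i.e. g(xy) ≤ x·g(y) + y·g(x) for all x,y ∈ [0,1]. If n ≥ 1 and x_1,…,x_n ≥ 0 satisfy Σ_{i=1}^n x_i ≤ 1, then Σ_{i=1}^n g(x_i) ≤ sup_{x∈[0,1]} g(x) + n·g(1/n)·Σ_{i=1}^n x_i. -/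
/-!
Write `x = S • y` with `S = ∑ xᵢ` and `∑ yᵢ = 1`. Subderivativity applied to each `S * yᵢ` gives
`∑ g(xᵢ) ≤ S ∑ g(yᵢ) + g(S)`; Jensen's inequality bounds `∑ g(yᵢ)` by `n g(1/n)`, and `g(S)` is at
most the supremum of `g`, which is finite because a concave function on a segment is bounded above.
-/

open Set

/-- Reflecting `z` through the midpoint `m` of `[a, b]`, concavity gives
`f z ≤ 2 f m - f (a + b - z)`, and a concave function is bounded below on `[a, b]` by its values at
the endpoints. -/
theorem ConcaveOn.bddAbove_image_Icc_s16 {a b : ℝ} {f : ℝ → ℝ} (hf : ConcaveOn ℝ (Icc a b) f) :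
    BddAbove (f '' Icc a b) := by
  refine ⟨2 * f ((a + b) / 2) - min (f a) (f b), ?_⟩
  rintro _ ⟨z, hz, rfl⟩
  have hab : a ≤ b := hz.1.trans hz.2
  have hz' : a + b - z ∈ Icc a b := ⟨by linarith [hz.2], by linarith [hz.1]⟩
  have hmid := hf.2 hz hz' (by norm_num : (0 : ℝ) ≤ 1 / 2) (by norm_num : (0 : ℝ) ≤ 1 / 2)
    (by norm_num)
  have hmin := hf.min_le_of_mem_Icc (left_mem_Icc.2 hab) (right_mem_Icc.2 hab) hz'
  simp only [smul_eq_mul] at hmid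
  rw [show 1 / 2 * z + 1 / 2 * (a + b - z) = (a + b) / 2 by ring] at hmid
  linarith

theorem ConcaveOn.sum_le_card_mul_map_sum_div_card {s : Set ℝ} {f : ℝ → ℝ}
    (hf : ConcaveOn ℝ s f) {ι : Type*} [Fintype ι] [Nonempty ι] {y : ι → ℝ}
    (hy : ∀ i, y i ∈ s) :
    ∑ i, f (y i) ≤ Fintype.card ι * f ((∑ i, y i) / Fintype.card ι) := by
  have hcard : (0 : ℝ) < Fintype.card ι := by exact_mod_cast Fintype.card_pos
  have hjensen := hf.le_map_sum (t := Finset.univ) (w := fun _ => 1 / (Fintype.card ι : ℝ))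
    (p := y) (fun _ _ => by positivity) (by simp [hcard.ne']) (fun i _ => hy i)
  simp only [smul_eq_mul, ← Finset.mul_sum] at hjensen
  rw [one_div_mul_eq_div, one_div_mul_eq_div] at hjensen
  calc ∑ i, f (y i) = Fintype.card ι * ((∑ i, f (y i)) / Fintype.card ι) := by
        field_simp
    _ ≤ _ := by gcongr

theorem sum_map_mul_le_of_subderivative {g : ℝ → ℝ}
    (hsub : ∀ x ∈ Icc (0 : ℝ) 1, ∀ y ∈ Icc (0 : ℝ) 1, g (x * y) ≤ x * g y + y * g x)
    {ι : Type*} [Fintype ι] {s : ℝ} (hs : s ∈ Icc (0 : ℝ) 1) {y : ι → ℝ}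
    (hy : ∀ i, y i ∈ Icc (0 : ℝ) 1) (hy1 : ∑ i, y i = 1) :
    ∑ i, g (s * y i) ≤ s * ∑ i, g (y i) + g s :=
  calc ∑ i, g (s * y i) ≤ ∑ i, (s * g (y i) + y i * g s) :=
        Finset.sum_le_sum fun i _ => hsub s hs (y i) (hy i)
    _ = s * ∑ i, g (y i) + g s := by
        rw [Finset.sum_add_distrib, ← Finset.mul_sum, ← Finset.sum_mul, hy1, one_mul]

theorem statement16_general (g : ℝ → ℝ) (hconc : ConcaveOn ℝ (Set.Icc 0 1) g) (hg0 : g 0 = 0)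
    (hsub : ∀ x ∈ Set.Icc (0 : ℝ) 1, ∀ y ∈ Set.Icc (0 : ℝ) 1,
      g (x * y) ≤ x * g y + y * g x)
    (n : ℕ) (x : Fin n → ℝ) (hx : ∀ i, 0 ≤ x i)
    (hsum : ∑ i, x i ≤ 1) :
    ∑ i, g (x i) ≤ sSup (g '' Set.Icc (0 : ℝ) 1) + n * g (1 / n) * ∑ i, x i := by
  have hbdd := hconc.bddAbove_image_Icc_s16
  set S := ∑ i, x i
  have hS_nonneg : 0 ≤ S := Finset.sum_nonneg fun i _ => hx i
  rcases hS_nonneg.eq_or_lt with hS0 | hSpos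
  · have hx0 : ∀ i, x i = 0 := by
      simpa using (Finset.sum_eq_zero_iff_of_nonneg fun i _ => hx i).1 hS0.symm
    rw [← hS0, mul_zero, add_zero]
    simpa [hx0, hg0] using le_csSup hbdd ⟨0, left_mem_Icc.2 zero_le_one, hg0⟩
  have : Nonempty (Fin n) :=
    Finset.univ_nonempty_iff.1 (Finset.nonempty_of_sum_ne_zero hSpos.ne')
  set y : Fin n → ℝ := fun i => x i / S
  have hy : ∀ i, y i ∈ Icc (0 : ℝ) 1 := fun i =>
    ⟨div_nonneg (hx i) hS_nonneg, (div_le_one hSpos).2 (Finset.single_le_sum (fun j _ => hx j)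
      (Finset.mem_univ i))⟩
  have hy1 : ∑ i, y i = 1 := by rw [← Finset.sum_div, div_self hSpos.ne']
  have hS : S ∈ Icc (0 : ℝ) 1 := ⟨hS_nonneg, hsum⟩
  have hxy : ∀ i, x i = S * y i := fun i => (mul_div_cancel₀ _ hSpos.ne').symm
  have hjensen := hconc.sum_le_card_mul_map_sum_div_card hy
  rw [hy1, Fintype.card_fin] at hjensen
  calc ∑ i, g (x i) = ∑ i, g (S * y i) := by simp only [← hxy]
    _ ≤ S * ∑ i, g (y i) + g S := sum_map_mul_le_of_subderivative hsub hS hy hy1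
    _ ≤ S * (n * g (1 / n)) + sSup (g '' Icc 0 1) := by
        gcongr
        exact le_csSup hbdd ⟨S, hS, rfl⟩
    _ = sSup (g '' Icc 0 1) + n * g (1 / n) * S := by ring

/-- Lemma: if `g` is a subderivative entropy function and `x₁,…,xₙ ≥ 0` with
`Σ xᵢ ≤ 1`, then `Σ g(xᵢ) ≤ sup_{x∈[0,1]} g(x) + n·g(1/n)·Σ xᵢ`. -/
theorem statement16 (g : ℝ → ℝ) (hconc : ConcaveOn ℝ (Set.Icc 0 1) g) (hg0 : g 0 = 0)
    (hg0' : Filter.Tendsto g (nhdsWithin 0 (Set.Ioi 0)) (nhds 0))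
    (hsub : ∀ x ∈ Set.Icc (0 : ℝ) 1, ∀ y ∈ Set.Icc (0 : ℝ) 1,
      g (x * y) ≤ x * g y + y * g x)
    (n : ℕ) (hn : 1 ≤ n) (x : Fin n → ℝ) (hx : ∀ i, 0 ≤ x i)
    (hsum : ∑ i, x i ≤ 1) :
    ∑ i, g (x i) ≤ sSup (g '' Set.Icc (0 : ℝ) 1) + n * g (1 / n) * ∑ i, x i :=
  statement16_general g hconc hg0 hsub n x hx hsum
end
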